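/- Multinomial is natural: for a channel c : X → D(Y), K ∈ ℕ, and distribution ω on X, pushing Multinomial[K](ω) forward along the multiset-extended channel M[K](c) gives the multinomial of the pushforward: M[K](c) ≫ Multinomial[K](ω) = Multinomial[K](c≫ω). -/

import Mathlib

open Finset

noncomputable def validity {X : Type*} [Fintype X] (ω p : X → ℝ) : ℝ := ∑ x, ω x * p x
noncomputable def updateD {X : Type*} [Fintype X] (ω p : X → ℝ) : X → ℝ :=
  fun x => ω x * p x / validity ω p
noncomputable def push {X Y : Type*} [Fintype X] (c : X → Y → ℝ) (ω : X → ℝ) : Y → ℝ :=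
  fun y => ∑ x, ω x * c x y
noncomputable def pull {X Y : Type*} [Fintype Y] (c : X → Y → ℝ) (q : Y → ℝ) : X → ℝ :=
  fun x => ∑ y, c x y * q y
noncomputable def dagger {X Y : Type*} [Fintype X] (c : X → Y → ℝ) (ω : X → ℝ) : Y → X → ℝ :=
  fun y x => ω x * c x y / push c ω y

def IsDist {X : Type*} [Fintype X] (ω : X → ℝ) : Prop :=
  (∀ x, 0 ≤ ω x) ∧ ∑ x, ω x = 1
def IsChannel {X Y : Type*} [Fintype Y] (c : X → Y → ℝ) : Prop :=
  ∀ x, IsDist (c x)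
def IsPred {X : Type*} (p : X → ℝ) : Prop := ∀ x, 0 ≤ p x ∧ p x ≤ 1

noncomputable def coefm {X : Type*} [Fintype X] [DecidableEq X] (K : ℕ) (φ : Sym X K) : ℝ :=
  (K.factorial : ℝ) / ∏ x, (((φ : Multiset X).count x).factorial : ℝ)
noncomputable def multinom {X : Type*} [Fintype X] [DecidableEq X] (K : ℕ) (ω : X → ℝ)
    (φ : Sym X K) : ℝ :=
  coefm K φ * ∏ x, ω x ^ ((φ : Multiset X).count x)
noncomputable def flrn {X : Type*} [DecidableEq X] (K : ℕ) (φ : Sym X K) : X → ℝ :=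
  fun x => ((φ : Multiset X).count x : ℝ) / K
def acc {X : Type*} {K : ℕ} (v : Fin K → X) : Sym X K :=
  ⟨Multiset.map v Finset.univ.val, by simp⟩
noncomputable def arr {X : Type*} [Fintype X] [DecidableEq X] {K : ℕ} (φ : Sym X K) :
    (Fin K → X) → ℝ :=
  fun v => if acc v = φ then 1 / coefm K φ else 0
noncomputable def Mchan {X Y : Type*} [Fintype X] [DecidableEq X] [Fintype Y] [DecidableEq Y]
    {K : ℕ} (c : X → Y → ℝ) : Sym X K → Sym Y K → ℝ :=
  fun φ ψ => ∑ v : Fin K → X, arr φ v *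
    ∑ w : Fin K → Y, (∏ i, c (v i) (w i)) * (if acc w = ψ then 1 else 0)
open Classical in
noncomputable def klE {Z : Type*} [Fintype Z] (ω ρ : Z → ℝ) : EReal :=
  if ∀ z, ω z ≠ 0 → ρ z ≠ 0 then ((∑ z, ω z * Real.log (ω z / ρ z) : ℝ) : EReal) else ⊤

/-!
`multinom K ω` is the law of the multiset `acc w` of `K` independent draws `w` from `ω`: it is
the pushforward of `ω^{⊗K}` along `acc`. As `ω^{⊗K}` is constant on the fibres of `acc`,
composing `acc` with `arr` leaves it unchanged, so the left-hand side is the pushforward of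
`ω^{⊗K}` along `c^{⊗K}` and then `acc`, that is of `(c ≫ ω)^{⊗K}` along `acc`.
-/

section Multiset

variable {X : Type*} [Fintype X] [DecidableEq X]

lemma prod_pow_count_eq_prod_map {M : Type*} [CommMonoid M] (f : X → M) (s : Multiset X) :
    ∏ x, f x ^ s.count x = (s.map f).prod := by
  rw [Finset.prod_multiset_map_count]
  exact (prod_subset (subset_univ _) fun x _ hx => by
    rw [Multiset.count_eq_zero_of_notMem (by simpa using hx), pow_zero]).symm

lemma prod_factorial_count_cons (x : X) (s : Multiset X) :
    ∏ y, ((x ::ₘ s).count y).factorial = (x ::ₘ s).count x * ∏ y, (s.count y).factorial := by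
  rw [Fintype.prod_eq_mul_prod_compl x,
    Fintype.prod_eq_mul_prod_compl x fun y => (s.count y).factorial, Multiset.count_cons_self,
    Nat.factorial_succ, mul_assoc]
  congr 2
  refine prod_congr rfl fun y hy => ?_
  rw [Multiset.count_cons_of_ne (by simpa using hy)]

end Multiset

section Sym

variable {X : Type*} {K : ℕ}

lemma acc_cons (x : X) (w : Fin K → X) :
    acc (Fin.cons x w : Fin (K + 1) → X) = x ::ₛ acc w := by
  ext1
  rw [Sym.coe_cons]
  simp [acc, Fin.univ_val_map, List.ofFn_succ]

lemma prod_pow_count_acc [Fintype X] [DecidableEq X] {M : Type*} [CommMonoid M]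
    (f : X → M) (v : Fin K → X) :
    ∏ x, f x ^ (acc v : Multiset X).count x = ∏ i, f (v i) := by
  rw [prod_pow_count_eq_prod_map]
  simp [acc, Finset.prod_eq_multiset_prod, Function.comp_def]

lemma Sym.cons_eq_iff_eq_erase [DecidableEq X] {x : X} {φ : Sym X K} {ψ : Sym X (K + 1)} :
    x ::ₛ φ = ψ ↔ ∃ h : x ∈ ψ, φ = ψ.erase x h := by
  constructor
  · rintro rfl
    exact ⟨Sym.mem_cons_self x φ, (Sym.erase_cons_head φ x _).symm⟩
  · rintro ⟨h, rfl⟩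
    exact Sym.cons_erase h

end Sym

section Multinomial

variable {X : Type*} [Fintype X] [DecidableEq X]

lemma coefm_pos {K : ℕ} (φ : Sym X K) : 0 < coefm K φ :=
  div_pos (mod_cast K.factorial_pos) (prod_pos fun _ _ => mod_cast Nat.factorial_pos _)

lemma count_mul_multinom_cons {K : ℕ} (μ : X → ℝ) (x : X) (φ : Sym X K) :
    (x ::ₛ φ : Multiset X).count x * multinom (K + 1) μ (x ::ₛ φ) =
      (K + 1) * (μ x * multinom K μ φ) := by
  have hfact : ∏ y, (((x ::ₘ (φ : Multiset X)).count y).factorial : ℝ) =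
      (x ::ₘ (φ : Multiset X)).count x * ∏ y, (((φ : Multiset X).count y).factorial : ℝ) :=
    mod_cast prod_factorial_count_cons x (φ : Multiset X)
  have hcount : ((x ::ₘ (φ : Multiset X)).count x : ℝ) ≠ 0 :=
    mod_cast (Multiset.count_pos.2 (Multiset.mem_cons_self _ _)).ne'
  simp only [multinom, coefm, Sym.coe_cons, prod_pow_count_eq_prod_map, Multiset.map_cons,
    Multiset.prod_cons]
  rw [hfact, Nat.factorial_succ]
  field_simp
  push_cast
  ring

lemma multinom_succ {K : ℕ} (μ : X → ℝ) (ψ : Sym X (K + 1)) :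
    multinom (K + 1) μ ψ =
      ∑ x, if h : x ∈ ψ then μ x * multinom K μ (ψ.erase x h) else 0 := by
  have hterm : ∀ x, (if h : x ∈ ψ then μ x * multinom K μ (ψ.erase x h) else 0) =
      (ψ : Multiset X).count x / (K + 1) * multinom (K + 1) μ ψ := by
    intro x
    split_ifs with h
    · have hcons := count_mul_multinom_cons μ x (ψ.erase x h)
      rw [Sym.cons_erase] at hcons
      field_simp
      linarith
    · simp [Multiset.count_eq_zero_of_notMem (Sym.mem_coe.not.2 h)]
  have hsum : ∑ x, ((ψ : Multiset X).count x : ℝ) = K + 1 := by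
    exact_mod_cast (Multiset.sum_count_eq_card fun x _ => mem_univ x).trans ψ.2
  rw [sum_congr rfl fun x _ => hterm x, ← sum_mul, ← sum_div, hsum, div_self (by positivity),
    one_mul]

theorem multinom_eq_sum_acc (μ : X → ℝ) : ∀ {K : ℕ} (ψ : Sym X K),
    multinom K μ ψ = ∑ w : Fin K → X, if acc w = ψ then ∏ i, μ (w i) else 0
  | 0, ψ => by
    rw [Fintype.sum_unique, if_pos (Subsingleton.elim _ _)]
    simp [multinom, coefm, Sym.eq_nil_of_card_zero ψ, Sym.coe_nil]
  | K + 1, ψ => by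
    rw [multinom_succ, ← (Fin.consEquiv fun _ => X).sum_comp, Fintype.sum_prod_type]
    refine sum_congr rfl fun x _ => ?_
    simp only [Fin.consEquiv, Equiv.coe_fn_mk, acc_cons, Fin.prod_univ_succ, Fin.cons_zero,
      Fin.cons_succ, Sym.cons_eq_iff_eq_erase]
    split_ifs with hx
    · simp only [exists_prop_of_true hx, multinom_eq_sum_acc μ (ψ.erase x hx), mul_sum, mul_ite,
        mul_zero]
    · simp [hx]

lemma multinom_mul_arr (ω : X → ℝ) {K : ℕ} (φ : Sym X K) (v : Fin K → X) :
    multinom K ω φ * arr φ v = if acc v = φ then ∏ i, ω (v i) else 0 := by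
  unfold arr
  split_ifs with h
  · subst h
    rw [multinom, prod_pow_count_acc, mul_one_div, mul_div_right_comm,
      div_self (coefm_pos _).ne', one_mul]
  · exact mul_zero _

end Multinomial

theorem stmt17_general {X Y : Type*} [Fintype X] [DecidableEq X] [Fintype Y] [DecidableEq Y]
    (K : ℕ) (c : X → Y → ℝ) (ω : X → ℝ) :
    ∀ ψ : Sym Y K,
      ∑ φ : Sym X K, multinom K ω φ * Mchan c φ ψ = multinom K (push c ω) ψ := by
  intro ψ
  calc ∑ φ : Sym X K, multinom K ω φ * Mchan c φ ψ
      = ∑ v : Fin K → X, ∑ φ : Sym X K, (if acc v = φ then ∏ i, ω (v i) else 0) *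
          ∑ w : Fin K → Y, (∏ i, c (v i) (w i)) * if acc w = ψ then 1 else 0 := by
        simp only [Mchan, mul_sum, ← mul_assoc, multinom_mul_arr]
        exact sum_comm
    _ = ∑ v : Fin K → X, ∑ w : Fin K → Y,
          if acc w = ψ then ∏ i, ω (v i) * c (v i) (w i) else 0 := by
        simp only [ite_mul, zero_mul, sum_ite_eq, mem_univ, if_true]
        simp only [mul_sum, mul_ite, mul_one, mul_zero, prod_mul_distrib]
    _ = ∑ w : Fin K → Y, if acc w = ψ then ∏ i, push c ω (w i) else 0 := by
        rw [sum_comm]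
        simp only [push, Fintype.prod_sum, sum_ite_irrel, sum_const_zero]
    _ = multinom K (push c ω) ψ := (multinom_eq_sum_acc _ ψ).symm

theorem stmt17 {X Y : Type*} [Fintype X] [DecidableEq X] [Fintype Y] [DecidableEq Y]
    (K : ℕ) (c : X → Y → ℝ) (hc : IsChannel c) (ω : X → ℝ) (hω : IsDist ω) :
    ∀ ψ : Sym Y K,
      ∑ φ : Sym X K, multinom K ω φ * Mchan c φ ψ = multinom K (push c ω) ψ :=
  stmt17_general K c ω
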